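/- arXiv:math/0412330 — 6 statements merged into one kernel-verified Lean document; each statement's English description precedes it below -/
import Mathlib

section
/- Let G be a group, let λ₀, μ₀ ∈ ℂ be nonzero, let ρ : G →* SL(2,ℂ) be a group homomorphism, let ℓ : G →* Multiplicative ℤ be a group homomorphism (written additively as ℓ : G → ℤ with ℓ(g₁g₂) = ℓ(g₁) + ℓ(g₂)), and let m, l ∈ G be elements such that ρ(m) = diag(μ₀, μ₀⁻¹), ρ(l) = diag(λ₀, λ₀⁻¹), ℓ(m) = 1, and ℓ(l) = 0. Define φ : G → ℂ by φ(γ) = (1 − μ₀²) · (−μ₀)^{ℓ(γ)} · (ρ(γ))₀₀, where (ρ(γ))₀₀ denotes the upper-left entry. Then: (i) φ(1) = 1 + (−μ₀²); (ii) φ(γ·m) = φ(m·γ) = (−μ₀²)·φ(γ) for all γ ∈ G; (iii) φ(γ·l) = φ(l·γ) = λ₀·φ(γ) for all γ ∈ G; (iv) φ(γ₁·γ₂) + φ(γ₁·m·γ₂) = φ(γ₁)·φ(γ₂) for all γ₁, γ₂ ∈ G. -/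
open Matrix

/-- Core construction in the proof of Proposition 4.3 of Ng's paper: given a
diagonal `SL₂ℂ` representation `ρ` of a group `G` and a homomorphism
`ℓ : G → ℤ` with `ℓ(m) = 1`, `ℓ(l) = 0`, the map
`φ(γ) = (1 − μ₀²)(−μ₀)^{ℓ(γ)}·(ρ(γ))₀₀` satisfies the defining relations of
the cord algebra with `(λ, μ)` specialized to `(λ₀, −μ₀²)`. -/
theorem cordAlgebra_relations_of_SL2_rep {G : Type*} [Group G]
    (lam0 mu0 : ℂ) (hlam0 : lam0 ≠ 0) (hmu0 : mu0 ≠ 0)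
    (ρ : G →* Matrix.SpecialLinearGroup (Fin 2) ℂ)
    (ℓ : G →* Multiplicative ℤ)
    (m l : G)
    (hρm : (ρ m : Matrix (Fin 2) (Fin 2) ℂ) = !![mu0, 0; 0, mu0⁻¹])
    (hρl : (ρ l : Matrix (Fin 2) (Fin 2) ℂ) = !![lam0, 0; 0, lam0⁻¹])
    (hℓm : ℓ m = Multiplicative.ofAdd (1 : ℤ))
    (hℓl : ℓ l = Multiplicative.ofAdd (0 : ℤ))
    (φ : G → ℂ)
    (hφ : ∀ γ : G, φ γ =
      (1 - mu0 ^ 2) * (-mu0) ^ (Multiplicative.toAdd (ℓ γ)) *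
        ((ρ γ : Matrix (Fin 2) (Fin 2) ℂ) 0 0)) :
    φ 1 = 1 + (-mu0 ^ 2) ∧
    (∀ γ : G, φ (γ * m) = (-mu0 ^ 2) * φ γ ∧ φ (m * γ) = (-mu0 ^ 2) * φ γ) ∧
    (∀ γ : G, φ (γ * l) = lam0 * φ γ ∧ φ (l * γ) = lam0 * φ γ) ∧
    (∀ γ₁ γ₂ : G, φ (γ₁ * γ₂) + φ (γ₁ * m * γ₂) = φ γ₁ * φ γ₂) := by
  have hne : (-mu0 : ℂ) ≠ 0 := neg_ne_zero.mpr hmu0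
  have hmul : ∀ g h : G, ((ρ (g * h) : Matrix (Fin 2) (Fin 2) ℂ)) =
      (ρ g : Matrix (Fin 2) (Fin 2) ℂ) * (ρ h : Matrix (Fin 2) (Fin 2) ℂ) := by
    intro g h; rw [_root_.map_mul]; rfl
  have hℓmul : ∀ g h : G, Multiplicative.toAdd (ℓ (g * h)) =
      Multiplicative.toAdd (ℓ g) + Multiplicative.toAdd (ℓ h) := by
    intro g h; rw [_root_.map_mul, toAdd_mul]
  have entry : ∀ g h : G, ((ρ (g * h) : Matrix (Fin 2) (Fin 2) ℂ)) 0 0 =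
      (ρ g : Matrix (Fin 2) (Fin 2) ℂ) 0 0 * (ρ h : Matrix (Fin 2) (Fin 2) ℂ) 0 0 +
      (ρ g : Matrix (Fin 2) (Fin 2) ℂ) 0 1 * (ρ h : Matrix (Fin 2) (Fin 2) ℂ) 1 0 := by
    intro g h
    rw [hmul, Matrix.mul_apply, Fin.sum_univ_two]
  have entry01 : ∀ g h : G, ((ρ (g * h) : Matrix (Fin 2) (Fin 2) ℂ)) 0 1 =
      (ρ g : Matrix (Fin 2) (Fin 2) ℂ) 0 0 * (ρ h : Matrix (Fin 2) (Fin 2) ℂ) 0 1 +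
      (ρ g : Matrix (Fin 2) (Fin 2) ℂ) 0 1 * (ρ h : Matrix (Fin 2) (Fin 2) ℂ) 1 1 := by
    intro g h
    rw [hmul, Matrix.mul_apply, Fin.sum_univ_two]
  refine ⟨?_, ?_, ?_, ?_⟩
  · have h1 : Multiplicative.toAdd (ℓ (1:G)) = 0 := by rw [_root_.map_one]; rfl
    have h2 : ((ρ (1:G) : Matrix (Fin 2) (Fin 2) ℂ)) 0 0 = 1 := by
      rw [_root_.map_one]; simp
    rw [hφ, h1, h2, zpow_zero]; ring
  · intro γ
    constructor
    · rw [hφ, hφ γ, entry, hρm, hℓmul, hℓm]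
      simp only [toAdd_ofAdd, zpow_add₀ hne, zpow_one]
      simp [Matrix.cons_val_zero, Matrix.cons_val_one]
      ring
    · rw [hφ, hφ γ, entry, hρm, hℓmul, hℓm]
      simp only [toAdd_ofAdd, zpow_add₀ hne, zpow_one]
      simp [Matrix.cons_val_zero, Matrix.cons_val_one]
      ring
  · intro γ
    constructor
    · rw [hφ, hφ γ, entry, hρl, hℓmul, hℓl]
      simp only [toAdd_ofAdd, zpow_add₀ hne, zpow_zero]
      simp [Matrix.cons_val_zero, Matrix.cons_val_one]
      ring
    · rw [hφ, hφ γ, entry, hρl, hℓmul, hℓl]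
      simp only [toAdd_ofAdd, zpow_add₀ hne, zpow_zero]
      simp [Matrix.cons_val_zero, Matrix.cons_val_one]
      ring
  · intro γ₁ γ₂
    rw [hφ (γ₁ * γ₂), hφ (γ₁ * m * γ₂), hφ γ₁, hφ γ₂, entry]
    have e2 : ((ρ (γ₁ * m * γ₂) : Matrix (Fin 2) (Fin 2) ℂ)) 0 0 =
        (ρ γ₁ : Matrix (Fin 2) (Fin 2) ℂ) 0 0 * mu0 * (ρ γ₂ : Matrix (Fin 2) (Fin 2) ℂ) 0 0 +
        (ρ γ₁ : Matrix (Fin 2) (Fin 2) ℂ) 0 1 * mu0⁻¹ * (ρ γ₂ : Matrix (Fin 2) (Fin 2) ℂ) 1 0 := by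
      rw [entry (γ₁ * m) γ₂, entry γ₁ m, entry01 γ₁ m, hρm]
      simp
    rw [e2, hℓmul (γ₁ * m) γ₂, hℓmul γ₁ m, hℓm, hℓmul γ₁ γ₂]
    simp only [toAdd_ofAdd, zpow_add₀ hne, zpow_one]
    field_simp
    ring
end

section
/- Let F be the free (noncommutative, unital) R-algebra on generators x_n indexed by n ∈ ℤ, and let U be the quotient of F by the two-sided ideal generated by the elements: x_0 − (1+μ); x_{n+1} − μ·x_n for all n ∈ ℤ; x_n − λ·x_n for all n ∈ ℤ; and x_{a+b} + x_{a+b+1} − x_a·x_b for all a, b ∈ ℤ. Then U is isomorphic as an R-algebra to the quotient R ⧸ ((λ−1)(μ+1)) of R by the principal ideal generated by (λ−1)(μ+1), under an isomorphism sending the class of x_n to the class of μⁿ(1+μ). -/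
/-!
The relations `x₀ = 1 + μ` and `x_{n+1} = μ xₙ` force `xₙ = μⁿ(1 + μ)` in `U` (using that `μ`
is a unit), so `U` is a quotient of `R`. The relation `xₙ = λ xₙ` then kills exactly
`(λ - 1)(μ + 1)`, while the skein relation holds automatically, since
`μᵃ(1 + μ) · μᵇ(1 + μ) = μᵃ⁺ᵇ(1 + μ) + μᵃ⁺ᵇ⁺¹(1 + μ)`.
-/

noncomputable section

/-- The Laurent polynomial ring `ℤ[λ^{±1}, μ^{±1}]`. -/
abbrev R : Type := AddMonoidAlgebra ℤ (ℤ × ℤ)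

/-- The variable `λ`. -/
def lam : R := AddMonoidAlgebra.single (1, 0) 1

/-- The variable `μ`. -/
def mu : R := AddMonoidAlgebra.single (0, 1) 1

/-- The Laurent monomial `μⁿ` for `n : ℤ`. -/
def muPow (n : ℤ) : R := AddMonoidAlgebra.single (0, n) 1

/-- The free noncommutative unital `R`-algebra on generators `xₙ`, `n : ℤ`. -/
abbrev F : Type := FreeAlgebra R ℤ

/-- The generator `xₙ`. -/
def x (n : ℤ) : F := FreeAlgebra.ι R n

/-- The defining relations of the cord algebra of the unknot: each listed
element is set equal to `0`, so that `RingQuot` quotients by the two-sided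
ideal they generate. -/
inductive UnknotRel : F → F → Prop
  | base : UnknotRel (x 0 - algebraMap R F (1 + mu)) 0
  | sucRel (n : ℤ) : UnknotRel (x (n + 1) - algebraMap R F mu * x n) 0
  | lamRel (n : ℤ) : UnknotRel (x n - algebraMap R F lam * x n) 0
  | skein (a b : ℤ) : UnknotRel (x (a + b) + x (a + b + 1) - x a * x b) 0

/-- The cord algebra of the unknot, presented by generators and relations. -/
abbrev U : Type := RingQuot UnknotRel

open RingQuot (mkAlgHom mkAlgHom_rel)

lemma muPow_zero : muPow 0 = 1 := rfl

lemma muPow_one : muPow 1 = mu := rfl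

lemma muPow_add (a b : ℤ) : muPow (a + b) = muPow a * muPow b := by
  simp [muPow, AddMonoidAlgebra.single_mul_single]

lemma muPow_mul_muPow_neg (n : ℤ) : muPow n * muPow (-n) = 1 := by
  rw [← muPow_add, add_neg_cancel, muPow_zero]

abbrev unknotIdeal : Ideal R := Ideal.span {(lam - 1) * (mu + 1)}

def cordEval : F →ₐ[R] R := FreeAlgebra.lift R fun n => muPow n * (1 + mu)

lemma cordEval_x (n : ℤ) : cordEval (x n) = muPow n * (1 + mu) := by
  simp [cordEval, x]

lemma cordEval_sub_mem_of_unknotRel {a b : F} (h : UnknotRel a b) :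
    cordEval a - cordEval b ∈ unknotIdeal := by
  rw [Ideal.mem_span_singleton']
  cases h with
  | base => exact ⟨0, by simp [cordEval_x, muPow_zero]⟩
  | sucRel n => exact ⟨0, by simp [cordEval_x, muPow_add, muPow_one]; ring⟩
  | lamRel n => exact ⟨-muPow n, by simp [cordEval_x]; ring⟩
  | skein a b => exact ⟨0, by simp [cordEval_x, muPow_add, muPow_one]; ring⟩

lemma mkₐ_comp_cordEval_eq_of_unknotRel ⦃a b : F⦄ (h : UnknotRel a b) :
    (Ideal.Quotient.mkₐ R unknotIdeal).comp cordEval a =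
      (Ideal.Quotient.mkₐ R unknotIdeal).comp cordEval b :=
  Ideal.Quotient.eq.mpr (cordEval_sub_mem_of_unknotRel h)

def unknotToQuotient : U →ₐ[R] R ⧸ unknotIdeal :=
  RingQuot.liftAlgHom R ⟨_, mkₐ_comp_cordEval_eq_of_unknotRel⟩

lemma unknotToQuotient_mkAlgHom_x (n : ℤ) :
    unknotToQuotient (mkAlgHom R UnknotRel (x n)) =
      Ideal.Quotient.mk unknotIdeal (muPow n * (1 + mu)) := by
  rw [unknotToQuotient, RingQuot.liftAlgHom_mkAlgHom_apply, AlgHom.comp_apply, cordEval_x,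
    Ideal.Quotient.mkₐ_eq_mk]

lemma mkAlgHom_x (n : ℤ) :
    mkAlgHom R UnknotRel (x n) = algebraMap R U (muPow n * (1 + mu)) := by
  let X : ℤ → U := fun n => mkAlgHom R UnknotRel (x n)
  have hzero : X 0 = algebraMap R U (1 + mu) :=
    sub_eq_zero.mp (by simpa using mkAlgHom_rel R UnknotRel.base)
  have hsucc (n : ℤ) : X (n + 1) = algebraMap R U mu * X n :=
    sub_eq_zero.mp (by simpa using mkAlgHom_rel R (UnknotRel.sucRel n))
  have hper : Function.Periodic (fun n => algebraMap R U (muPow (-n)) * X n) 1 := by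
    intro n
    change algebraMap R U (muPow (-(n + 1))) * X (n + 1) = algebraMap R U (muPow (-n)) * X n
    rw [hsucc, ← mul_assoc, ← map_mul, ← muPow_one, ← muPow_add, neg_add, neg_add_cancel_right]
  have hconst : algebraMap R U (muPow (-n)) * X n = X 0 := by
    simpa only [Int.cast_id, mul_one, neg_zero, muPow_zero, map_one, one_mul]
      using hper.int_mul_eq n
  calc X n = algebraMap R U (muPow n * muPow (-n)) * X n := by
        rw [muPow_mul_muPow_neg, map_one, one_mul]
    _ = algebraMap R U (muPow n * (1 + mu)) := by
        rw [map_mul, mul_assoc, hconst, hzero, map_mul]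

lemma algebraMap_unknotGen : algebraMap R U ((lam - 1) * (mu + 1)) = 0 := by
  have h := mkAlgHom_rel R (UnknotRel.lamRel 0)
  rw [map_zero, map_sub, map_mul, AlgHom.commutes, mkAlgHom_x, ← map_mul, ← map_sub] at h
  have hgen : (lam - 1) * (mu + 1) = -(muPow 0 * (1 + mu) - lam * (muPow 0 * (1 + mu))) := by
    rw [muPow_zero]
    ring
  rw [hgen, map_neg, h]
  exact neg_zero (G := U)

def quotientToUnknot : R ⧸ unknotIdeal →ₐ[R] U :=
  Ideal.Quotient.liftₐ unknotIdeal (Algebra.ofId R U) fun a ha => by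
    obtain ⟨c, rfl⟩ := Ideal.mem_span_singleton'.mp ha
    simp [algebraMap_unknotGen]

lemma quotientToUnknot_mk (r : R) :
    quotientToUnknot (Ideal.Quotient.mk unknotIdeal r) = algebraMap R U r := rfl

/-- The cord algebra of the unknot is `ℤ[λ^{±1},μ^{±1}]/((λ−1)(μ+1))`, via an
isomorphism sending the class of `xₙ` to the class of `μⁿ(1+μ)`. -/
theorem unknot_cordAlgebra :
    ∃ e : U ≃ₐ[R] R ⧸ Ideal.span {(lam - 1) * (mu + 1)},
      ∀ n : ℤ, e (RingQuot.mkAlgHom R UnknotRel (x n)) =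
        Ideal.Quotient.mk (Ideal.span {(lam - 1) * (mu + 1)})
          (muPow n * (1 + mu)) := by
  refine ⟨AlgEquiv.ofAlgHom unknotToQuotient quotientToUnknot ?_ ?_,
    unknotToQuotient_mkAlgHom_x⟩
  · exact Ideal.Quotient.algHom_ext R (Subsingleton.elim _ _)
  · ext n
    change quotientToUnknot (unknotToQuotient (mkAlgHom R UnknotRel (x n))) =
      mkAlgHom R UnknotRel (x n)
    rw [unknotToQuotient_mkAlgHom_x, quotientToUnknot_mk, mkAlgHom_x]
end
end

section
/- Let 𝒜 be the free (noncommutative, unital) R-algebra on six generators a₁₂, a₁₃, a₂₁, a₂₃, a₃₁, a₃₂, and consider the 3×3 matrices over 𝒜: A = [[1+μ, a₁₂, a₁₃], [a₂₁, 1+μ, a₂₃], [a₃₁, a₃₂, 1+μ]], Ψ^L = [[−a₂₁, μ, λ], [1, −a₃₂, μ], [μ, 1, −a₁₃]], Ψ^R = [[−a₁₂, μ, 1], [1, −a₂₃, μ], [λ⁻¹μ, 1, −a₃₁]]. Let C be the quotient of 𝒜 by the two-sided ideal generated by the 18 entries of the matrices Ψ^L·A and A·Ψ^R. Then in C the following identities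 hold among the images of the generators: a₃₁ = λ⁻¹·a₂₁, a₁₃ = λ·a₁₂, a₃₂ = a₁₂, a₂₃ = a₂₁, a₂₃ = a₁₃, and consequently a₂₁ = λ·a₁₂, so that C is generated as an R-algebra by the image of a₁₂. -/
/-! The diagonal entries of `Ψ^L·A` and the first two diagonal entries of `A·Ψ^R` reduce, after
the `μ`-terms cancel, to `λa₃₁ - a₂₁`, `a₁₂ - a₃₂`, `a₂₃ - a₁₃`, `λ⁻¹μa₁₃ - μa₁₂` and
`μ(a₂₁ - a₂₃)`. Since `λ` and `μ` are units of `R`, setting these to zero expresses every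
generator as a Laurent monomial times `a₁₂`. -/

noncomputable section

/-- The Laurent monomial `λ⁻¹`. -/
def lamInv : R := AddMonoidAlgebra.single (-1, 0) 1

/-- The Laurent monomial `λ⁻¹μ`. -/
def lamInvMu : R := AddMonoidAlgebra.single (-1, 1) 1

/-- Index type of the six generators `a_{ij}`, `1 ≤ i ≠ j ≤ 3`. -/
abbrev Idx : Type := {p : Fin 3 × Fin 3 // p.1 ≠ p.2}

/-- The free noncommutative unital `R`-algebra on the six generators. -/
abbrev FA : Type := FreeAlgebra R Idx

/-- The generator `a_{ij}` (indices from `0`, so `a 0 1` is the paper's `a₁₂`). -/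
def a (i j : Fin 3) (h : i ≠ j) : FA := FreeAlgebra.ι R ⟨(i, j), h⟩

/-- The matrix `A` of the left-handed trefoil. -/
def Amat : Matrix (Fin 3) (Fin 3) FA :=
  !![algebraMap R FA (1 + mu), a 0 1 (by decide), a 0 2 (by decide);
     a 1 0 (by decide), algebraMap R FA (1 + mu), a 1 2 (by decide);
     a 2 0 (by decide), a 2 1 (by decide), algebraMap R FA (1 + mu)]

/-- The matrix `Ψ^L` of the left-handed trefoil. -/
def PsiL : Matrix (Fin 3) (Fin 3) FA :=
  !![-(a 1 0 (by decide)), algebraMap R FA mu, algebraMap R FA lam;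
     1, -(a 2 1 (by decide)), algebraMap R FA mu;
     algebraMap R FA mu, 1, -(a 0 2 (by decide))]

/-- The matrix `Ψ^R` of the left-handed trefoil. -/
def PsiR : Matrix (Fin 3) (Fin 3) FA :=
  !![-(a 0 1 (by decide)), algebraMap R FA mu, 1;
     1, -(a 1 2 (by decide)), algebraMap R FA mu;
     algebraMap R FA lamInvMu, 1, -(a 2 0 (by decide))]

/-- The 18 relations: the entries of `Ψ^L·A` and `A·Ψ^R` are set to `0`. -/
inductive TrefoilRel : FA → FA → Prop
  | left (i j : Fin 3) : TrefoilRel ((PsiL * Amat) i j) 0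
  | right (i j : Fin 3) : TrefoilRel ((Amat * PsiR) i j) 0

/-- The cord algebra of the left-handed trefoil, presented by generators and
relations. -/
abbrev CTref : Type := RingQuot TrefoilRel

/-- The canonical quotient map to the cord algebra. -/
def q : FA →ₐ[R] CTref := RingQuot.mkAlgHom R TrefoilRel

theorem AddMonoidAlgebra.single_mul_single_neg {k G : Type*} [Semiring k] [AddGroup G] (g : G) :
    single g (1 : k) * single (-g) 1 = 1 := by
  rw [single_mul_single, add_neg_cancel, mul_one, one_def]

theorem FreeAlgebra.adjoin_range_comp_ι_eq_top {R X A : Type*} [CommSemiring R] [Semiring A]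
    [Algebra R A] {f : FreeAlgebra R X →ₐ[R] A} (hf : Function.Surjective f) :
    Algebra.adjoin R (Set.range (f ∘ ι R)) = ⊤ := by
  rw [Set.range_comp, ← AlgHom.map_adjoin, adjoin_range_ι, Algebra.map_top,
    (AlgHom.range_eq_top f).2 hf]

theorem eq_algebraMap_mul_of_algebraMap_mul_eq {S A : Type*} [CommSemiring S] [Semiring A]
    [Algebra S A] {r s : S} (hsr : s * r = 1) {x y : A} (h : algebraMap S A r * x = y) :
    x = algebraMap S A s * y := by
  rw [← h, ← mul_assoc, ← map_mul, hsr, map_one, one_mul]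

theorem lam_mul_lamInv : lam * lamInv = 1 :=
  AddMonoidAlgebra.single_mul_single_neg (1, 0)

theorem isUnit_mu : IsUnit mu :=
  IsUnit.of_mul_eq_one _ (AddMonoidAlgebra.single_mul_single_neg (0, 1))

theorem lamInvMu_eq_mu_mul_lamInv : lamInvMu = mu * lamInv := by
  rw [mu, lamInv, AddMonoidAlgebra.single_mul_single]
  rfl

/- The `Ring` structure of a free algebra is `Algebra.semiringToRing`, whose negation `simp` and
`rw` do not match against `neg_mul`; this restatement is elaborated against it. -/
theorem FreeAlgebra.neg_mul' {S X : Type*} [CommRing S] (x y : FreeAlgebra S X) :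
    -x * y = -(x * y) :=
  neg_mul x y

theorem PsiL_mul_Amat_zero_zero :
    (PsiL * Amat) 0 0 = algebraMap R FA lam * a 2 0 (by decide) - a 1 0 (by decide) := by
  simp only [PsiL, Amat, Matrix.mul_apply, Fin.sum_univ_three, Matrix.of_apply, Matrix.cons_val',
    Matrix.cons_val_zero, Matrix.cons_val_one, Matrix.cons_val, Matrix.cons_val_fin_one, map_add,
    map_one, mul_add, mul_one, FreeAlgebra.neg_mul', Algebra.commutes]
  abel

theorem PsiL_mul_Amat_one_one : (PsiL * Amat) 1 1 = a 0 1 (by decide) - a 2 1 (by decide) := by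
  simp only [PsiL, Amat, Matrix.mul_apply, Fin.sum_univ_three, Matrix.of_apply, Matrix.cons_val',
    Matrix.cons_val_zero, Matrix.cons_val_one, Matrix.cons_val, Matrix.cons_val_fin_one, map_add,
    map_one, mul_add, one_mul, mul_one, FreeAlgebra.neg_mul', Algebra.commutes]
  abel

theorem PsiL_mul_Amat_two_two : (PsiL * Amat) 2 2 = a 1 2 (by decide) - a 0 2 (by decide) := by
  simp only [PsiL, Amat, Matrix.mul_apply, Fin.sum_univ_three, Matrix.of_apply, Matrix.cons_val',
    Matrix.cons_val_zero, Matrix.cons_val_one, Matrix.cons_val, Matrix.cons_val_fin_one, map_add,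
    map_one, mul_add, one_mul, mul_one, FreeAlgebra.neg_mul', Algebra.commutes]
  abel

theorem Amat_mul_PsiR_zero_zero :
    (Amat * PsiR) 0 0 =
      algebraMap R FA lamInvMu * a 0 2 (by decide) - algebraMap R FA mu * a 0 1 (by decide) := by
  simp only [Amat, PsiR, Matrix.mul_apply, Fin.sum_univ_three, Matrix.of_apply, Matrix.cons_val',
    Matrix.cons_val_zero, Matrix.cons_val_one, Matrix.cons_val, Matrix.cons_val_fin_one, map_add,
    map_one, add_mul, one_mul, mul_one, FreeAlgebra.neg_mul', Algebra.commutes]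
  abel

theorem Amat_mul_PsiR_one_one :
    (Amat * PsiR) 1 1 = algebraMap R FA mu * (a 1 0 (by decide) - a 1 2 (by decide)) := by
  simp only [Amat, PsiR, Matrix.mul_apply, Fin.sum_univ_three, Matrix.of_apply, Matrix.cons_val',
    Matrix.cons_val_zero, Matrix.cons_val_one, Matrix.cons_val, Matrix.cons_val_fin_one, map_add,
    map_one, add_mul, mul_sub, one_mul, mul_one, FreeAlgebra.neg_mul', Algebra.commutes]
  abel

theorem q_PsiL_mul_Amat (i j : Fin 3) : q ((PsiL * Amat) i j) = 0 :=
  (RingQuot.mkAlgHom_rel R (TrefoilRel.left i j)).trans (map_zero q)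

theorem q_Amat_mul_PsiR (i j : Fin 3) : q ((Amat * PsiR) i j) = 0 :=
  (RingQuot.mkAlgHom_rel R (TrefoilRel.right i j)).trans (map_zero q)

theorem q_a20_eq_lamInv_mul_q_a10 :
    q (a 2 0 (by decide)) = algebraMap R CTref lamInv * q (a 1 0 (by decide)) := by
  have h := q_PsiL_mul_Amat 0 0
  rw [PsiL_mul_Amat_zero_zero, map_sub, map_mul, AlgHom.commutes, sub_eq_zero] at h
  exact eq_algebraMap_mul_of_algebraMap_mul_eq (by rw [mul_comm, lam_mul_lamInv]) h

theorem q_a21_eq_q_a01 : q (a 2 1 (by decide)) = q (a 0 1 (by decide)) := by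
  have h := q_PsiL_mul_Amat 1 1
  rw [PsiL_mul_Amat_one_one, map_sub, sub_eq_zero] at h
  exact h.symm

theorem q_a12_eq_q_a02 : q (a 1 2 (by decide)) = q (a 0 2 (by decide)) := by
  have h := q_PsiL_mul_Amat 2 2
  rwa [PsiL_mul_Amat_two_two, map_sub, sub_eq_zero] at h

theorem q_a02_eq_lam_mul_q_a01 :
    q (a 0 2 (by decide)) = algebraMap R CTref lam * q (a 0 1 (by decide)) := by
  have h := q_Amat_mul_PsiR 0 0
  rw [Amat_mul_PsiR_zero_zero, map_sub, map_mul, map_mul, AlgHom.commutes, AlgHom.commutes,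
    sub_eq_zero, lamInvMu_eq_mu_mul_lamInv, map_mul, mul_assoc] at h
  exact eq_algebraMap_mul_of_algebraMap_mul_eq lam_mul_lamInv
    ((isUnit_mu.map (algebraMap R CTref)).mul_left_cancel h)

theorem q_a12_eq_q_a10 : q (a 1 2 (by decide)) = q (a 1 0 (by decide)) := by
  have h := q_Amat_mul_PsiR 1 1
  rw [Amat_mul_PsiR_one_one, map_mul, AlgHom.commutes,
    (isUnit_mu.map (algebraMap R CTref)).mul_right_eq_zero, map_sub, sub_eq_zero] at h
  exact h.symm

theorem q_a10_eq_lam_mul_q_a01 :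
    q (a 1 0 (by decide)) = algebraMap R CTref lam * q (a 0 1 (by decide)) := by
  rw [← q_a12_eq_q_a10, q_a12_eq_q_a02, q_a02_eq_lam_mul_q_a01]

theorem q_ι_mem_adjoin_q_a01 (x : Idx) :
    q (FreeAlgebra.ι R x) ∈ Algebra.adjoin R {q (a 0 1 (by decide))} := by
  have hx : q (a 0 1 (by decide)) ∈ Algebra.adjoin R {q (a 0 1 (by decide))} :=
    Algebra.self_mem_adjoin_singleton R _
  have hmul : ∀ r, algebraMap R CTref r * q (a 0 1 (by decide)) ∈
      Algebra.adjoin R {q (a 0 1 (by decide))} :=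
    fun r => mul_mem (Subalgebra.algebraMap_mem _ r) hx
  obtain ⟨⟨i, j⟩, hij⟩ := x
  fin_cases i <;> fin_cases j
  · exact absurd rfl hij
  · exact hx
  · exact q_a02_eq_lam_mul_q_a01 ▸ hmul lam
  · exact q_a10_eq_lam_mul_q_a01 ▸ hmul lam
  · exact absurd rfl hij
  · exact (q_a12_eq_q_a10.trans q_a10_eq_lam_mul_q_a01) ▸ hmul lam
  · exact q_a20_eq_lamInv_mul_q_a10 ▸ q_a10_eq_lam_mul_q_a01 ▸
      mul_mem (Subalgebra.algebraMap_mem _ lamInv) (hmul lam)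
  · exact q_a21_eq_q_a01 ▸ hx
  · exact absurd rfl hij

/-- In the cord algebra of the left-handed trefoil one has
`a₃₁ = λ⁻¹a₂₁`, `a₁₃ = λa₁₂`, `a₃₂ = a₁₂`, `a₂₃ = a₂₁`, `a₂₃ = a₁₃`, hence
`a₂₁ = λa₁₂`, and the algebra is generated by the image of `a₁₂`. -/
theorem trefoil_generator_relations :
    q (a 2 0 (by decide)) = algebraMap R CTref lamInv * q (a 1 0 (by decide)) ∧
    q (a 0 2 (by decide)) = algebraMap R CTref lam * q (a 0 1 (by decide)) ∧
    q (a 2 1 (by decide)) = q (a 0 1 (by decide)) ∧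
    q (a 1 2 (by decide)) = q (a 1 0 (by decide)) ∧
    q (a 1 2 (by decide)) = q (a 0 2 (by decide)) ∧
    q (a 1 0 (by decide)) = algebraMap R CTref lam * q (a 0 1 (by decide)) ∧
    Algebra.adjoin R {q (a 0 1 (by decide))} = ⊤ := by
  refine ⟨q_a20_eq_lamInv_mul_q_a10, q_a02_eq_lam_mul_q_a01, q_a21_eq_q_a01, q_a12_eq_q_a10,
    q_a12_eq_q_a02, q_a10_eq_lam_mul_q_a01, eq_top_iff.2 ?_⟩
  rw [← FreeAlgebra.adjoin_range_comp_ι_eq_top (RingQuot.mkAlgHom_surjective R TrefoilRel)]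
  exact Algebra.adjoin_le (Set.range_subset_iff.2 q_ι_mem_adjoin_q_a01)
end
end

section
/- For complex numbers λ, μ ∈ ℂ with λ ≠ 0, there exists x ∈ ℂ satisfying both λx² − λx − μ² − μ = 0 and λx² − μx − μ − 1 = 0 if and only if (λ − 1)(μ + 1)(λ − μ³) = 0. -/
/-- The augmentation variety of the left-handed trefoil: for `λ ≠ 0`, the two
quadratics `λx² − λx − μ² − μ` and `λx² − μx − μ − 1` have a common complex
root iff `(λ − 1)(μ + 1)(λ − μ³) = 0`. -/
theorem trefoil_augmentation_polynomial (l m : ℂ) (hl : l ≠ 0) :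
    (∃ x : ℂ, l * x ^ 2 - l * x - m ^ 2 - m = 0 ∧
        l * x ^ 2 - m * x - m - 1 = 0) ↔
      (l - 1) * (m + 1) * (l - m ^ 3) = 0 := by
  constructor
  · rintro ⟨x, h1, h2⟩
    linear_combination (l*((m-l)*x + m^2-1) - m*(m-l)) * (h1 - h2) - (m-l)^2 * h2
  · intro h
    rcases mul_eq_zero.mp h with h' | h3
    · rcases mul_eq_zero.mp h' with h1 | h2
      · exact ⟨m + 1, by linear_combination m*(m+1) * h1, by linear_combination (m+1)^2 * h1⟩
      · exact ⟨0, by linear_combination (-m) * h2, by linear_combination -h2⟩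
    · have hm : m ≠ 0 := by rintro rfl; simp at h3; exact hl h3
      have hlm : l = m ^ 3 := by linear_combination h3
      refine ⟨-1/m, ?_, ?_⟩ <;> rw [hlm] <;> field_simp <;> ring
end

section
/- In the polynomial ring R[x] over R, let f = λ·x² − λ·x − (μ² + μ) and g = λ·x² − μ·x − (μ + 1). Then there exists a unit u ∈ Rˣ such that the resultant of f and g (as degree-2 polynomials in x) equals u·(λ − 1)(μ + 1)(λ − μ³). -/
/-!
The Sylvester determinant of two quadratics `a x² + b x + c` and `a' x² + b' x + c'` has the
Bézout form `(a c' - a' c)² - (a b' - a' b)(b c' - b' c)`. For the trefoil polynomials this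
factors as `-λ (λ - 1)(μ + 1)(λ - μ³)`, and `-λ` is a unit because `λ` is the monomial of a
group element.
-/

noncomputable section

open Polynomial

/-- The resultant of two polynomials regarded as degree-2 polynomials in `x`,
i.e. the determinant of the 4×4 Sylvester matrix built from their
coefficients in degrees `2, 1, 0`. -/
def resultantDeg2 (f g : Polynomial R) : R :=
  Matrix.det
    !![f.coeff 2, f.coeff 1, f.coeff 0, 0;
       0, f.coeff 2, f.coeff 1, f.coeff 0;
       g.coeff 2, g.coeff 1, g.coeff 0, 0;
       0, g.coeff 2, g.coeff 1, g.coeff 0]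

theorem AddMonoidAlgebra.isUnit_single_one {k G : Type*} [Semiring k] [AddGroup G] (g : G) :
    IsUnit (AddMonoidAlgebra.single g (1 : k)) :=
  isUnit_iff_exists.mpr
    ⟨AddMonoidAlgebra.single (-g) 1, by simp [AddMonoidAlgebra.one_def],
      by simp [AddMonoidAlgebra.one_def]⟩

theorem isUnit_lam : IsUnit lam := AddMonoidAlgebra.isUnit_single_one _

theorem resultantDeg2_eq (f g : Polynomial R) :
    resultantDeg2 f g =
      (f.coeff 2 * g.coeff 0 - g.coeff 2 * f.coeff 0) ^ 2 -
        (f.coeff 2 * g.coeff 1 - g.coeff 2 * f.coeff 1) *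
          (f.coeff 1 * g.coeff 0 - g.coeff 1 * f.coeff 0) := by
  rw [resultantDeg2, Matrix.det_succ_row_zero]
  simp only [Fin.sum_univ_four, Matrix.det_fin_three, Matrix.submatrix_apply, Matrix.of_apply,
    Matrix.cons_val, Fin.succAbove, Fin.reduceSucc, Fin.reduceCastSucc, Fin.reduceLT, ↓reduceIte,
    Fin.val_zero, Fin.val_one, Fin.val_two]
  ring

theorem resultantDeg2_quadratic (a b c a' b' c' : R) :
    resultantDeg2 (C a * X ^ 2 - C b * X - C c) (C a' * X ^ 2 - C b' * X - C c') =
      (a * c' - a' * c) ^ 2 + (a * b' - a' * b) * (b * c' - b' * c) := by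
  rw [resultantDeg2_eq]
  simp only [coeff_sub, coeff_C_mul, coeff_X_pow, coeff_X, coeff_C, Nat.reduceEqDiff, ↓reduceIte,
    mul_one, mul_zero, sub_zero, zero_sub]
  ring

/-- The augmentation polynomial of the left-handed trefoil: the resultant of
`λx² − λx − (μ² + μ)` and `λx² − μx − (μ + 1)` equals
`(λ − 1)(μ + 1)(λ − μ³)` up to a unit of `ℤ[λ^{±1}, μ^{±1}]`. -/
theorem trefoil_resultant :
    ∃ u : Rˣ,
      resultantDeg2 (C lam * X ^ 2 - C lam * X - C (mu ^ 2 + mu))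
          (C lam * X ^ 2 - C mu * X - C (mu + 1)) =
        (u : R) * ((lam - 1) * (mu + 1) * (lam - mu ^ 3)) := by
  refine ⟨isUnit_lam.neg.unit, ?_⟩
  rw [IsUnit.unit_spec, resultantDeg2_quadratic]
  ring
end
end

section
/- Let E be a real inner product space and let γ : ℝ → E be a differentiable function that is periodic with period 1 (γ(s + 1) = γ(s) for all s) and is not constant. Then there exist s, t ∈ ℝ such that γ(s) ≠ γ(t), ⟪γ(s) − γ(t), deriv γ s⟫ = 0, and ⟪γ(s) − γ(t), deriv γ t⟫ = 0. -/
/-!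
The squared distance `(s, t) ↦ ‖γ s - γ t‖²` attains its maximum, because the range of a continuous
periodic curve is compact; since `γ` is not constant, the maximal chord is nondegenerate. At a
maximum both partial derivatives vanish, and the partial derivative in `s` (resp. `t`) is twice
the inner product of the chord with `deriv γ s` (resp. `-deriv γ t`).
-/

open Set

theorem IsCompact.exists_forall_dist_le {α : Type*} [PseudoMetricSpace α] {K : Set α}
    (hK : IsCompact K) (hne : K.Nonempty) :
    ∃ x ∈ K, ∃ y ∈ K, ∀ u ∈ K, ∀ v ∈ K, dist u v ≤ dist x y := by
  obtain ⟨⟨x, y⟩, ⟨hx, hy⟩, hmax⟩ :=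
    (hK.prod hK).exists_isMaxOn (hne.prod hne) continuous_dist.continuousOn
  exact ⟨x, hx, y, hy, fun u hu v hv => hmax (mk_mem_prod hu hv)⟩

theorem inner_sub_deriv_eq_zero_of_isLocalExtr {E : Type*} [NormedAddCommGroup E]
    [InnerProductSpace ℝ E] {γ : ℝ → E} {y : E} {s : ℝ} (hγ : DifferentiableAt ℝ γ s)
    (hextr : IsLocalExtr (fun u => ‖γ u - y‖ ^ 2) s) :
    inner ℝ (γ s - y) (deriv γ s) = 0 := by
  have h := hextr.hasDerivAt_eq_zero (hγ.hasDerivAt.sub_const y).norm_sq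
  linarith

/-- Every nonconstant differentiable closed curve (period `1`) in a real inner
product space possesses a binormal chord: points `s, t` with `γ(s) ≠ γ(t)`
such that the chord `γ(s) − γ(t)` is orthogonal to the curve at both
endpoints. -/
theorem exists_binormal_chord {E : Type*} [NormedAddCommGroup E]
    [InnerProductSpace ℝ E] (γ : ℝ → E) (hγ : Differentiable ℝ γ)
    (hper : ∀ s : ℝ, γ (s + 1) = γ s) (hnc : ¬ ∃ c : E, ∀ s : ℝ, γ s = c) :
    ∃ s t : ℝ, γ s ≠ γ t ∧
      inner ℝ (γ s - γ t) (deriv γ s) = (0 : ℝ) ∧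
      inner ℝ (γ s - γ t) (deriv γ t) = (0 : ℝ) := by
  obtain ⟨_, ⟨s, rfl⟩, _, ⟨t, rfl⟩, hmax⟩ :=
    (Function.Periodic.compact_of_continuous hper one_ne_zero hγ.continuous).exists_forall_dist_le
      (range_nonempty γ)
  have hchord (u v : ℝ) : ‖γ u - γ v‖ ^ 2 ≤ ‖γ s - γ t‖ ^ 2 := by
    simpa only [dist_eq_norm] using
      pow_le_pow_left₀ dist_nonneg (hmax _ (mem_range_self u) _ (mem_range_self v)) 2
  refine ⟨s, t, fun hst => hnc ⟨γ t, fun u => ?_⟩, ?_, ?_⟩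
  · simpa [hst, sub_eq_zero] using hchord u t
  · exact inner_sub_deriv_eq_zero_of_isLocalExtr (hγ s)
      (Or.inr (Filter.Eventually.of_forall fun u => hchord u t))
  · have h := inner_sub_deriv_eq_zero_of_isLocalExtr (y := γ s) (hγ t)
      (Or.inr (Filter.Eventually.of_forall fun v => by
        dsimp only; rw [norm_sub_rev (γ v), norm_sub_rev (γ t)]; exact hchord s v))
    rwa [← neg_sub, inner_neg_left, neg_eq_zero]
end
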